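/- With the setup of the Holevo-Helstrom strategy (σ₀ ≠ σ₁ density matrices, {E₀,E₁} the Holevo-Helstrom measurement, μ a distribution on X × {σ₀,σ₁}, ν the induced noisy distribution, g : X → {0,1}, h(x) = σ_{g(x)}, R_μ(h) = (‖σ₀−σ₁‖₁/2)·P_μ[h(x) ≠ ρ]), the risks satisfy R̃_ν(g) − max{tr[σ₀E₁], tr[σ₁E₀]} ≤ R_μ(h) ≤ R̃_ν(g) − min{tr[σ₀E₁], tr[σ₁E₀]}. -/

import Mathlib

/-!
Diagonalise `Δ = σ₀ - σ₁` with eigenvalues `λᵢ`. The Helstrom projection `E₀` keeps the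
eigenvectors with `λᵢ ≥ 0`, so `tr[Δ E₀] = ∑ λᵢ⁺ = ½ ∑ |λᵢ| = ½ ‖Δ‖₁` because `tr Δ = 0`.
Since `E₁ = 1 - E₀` and both states have unit trace, outcome by outcome `tr[σ_y E_{g(x)}]` is
`½ ‖Δ‖₁ · [g(x) ≠ y]` plus the error term `tr[σ₁E₀]` or `tr[σ₀E₁]` selected by `g(x)`.
Averaging over `μ`, `R̃_ν(g) - R_μ(h)` is a convex combination of these two error terms,
hence lies between their minimum and maximum.
-/

open Matrix
open scoped Matrix ComplexOrder Classical

noncomputable def psqrt {ι : Type*} [Fintype ι] [DecidableEq ι] (A : Matrix ι ι ℂ) : Matrix ι ι ℂ :=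
  if h : A.PosSemidef then
    (h.1.eigenvectorUnitary : Matrix ι ι ℂ) *
      Matrix.diagonal (((↑) : ℝ → ℂ) ∘ Real.sqrt ∘ h.1.eigenvalues) *
      (star (h.1.eigenvectorUnitary : Matrix ι ι ℂ))
  else 0

noncomputable def traceNorm {ι : Type*} [Fintype ι] [DecidableEq ι] (A : Matrix ι ι ℂ) : ℝ :=
  (psqrt (Aᴴ * A)).trace.re

noncomputable def helstromProj {ι : Type*} [Fintype ι] [DecidableEq ι] (A : Matrix ι ι ℂ) : Matrix ι ι ℂ :=
  if h : A.IsHermitian then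
    (h.eigenvectorUnitary : Matrix ι ι ℂ) *
      Matrix.diagonal (fun i => if 0 ≤ h.eigenvalues i then (1:ℂ) else 0) *
      (star (h.eigenvectorUnitary : Matrix ι ι ℂ))
  else 0

namespace Matrix

variable {𝕜 ι : Type*} [RCLike 𝕜] [Fintype ι] [DecidableEq ι] {A : Matrix ι ι 𝕜}

lemma IsHermitian.trace_cfc (hA : A.IsHermitian) (f : ℝ → ℝ) :
    (cfc f A).trace = ∑ i, (f (hA.eigenvalues i) : 𝕜) := by
  rw [hA.cfc_eq, IsHermitian.cfc, Unitary.conjStarAlgAut_apply, trace_mul_cycle,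
    Unitary.coe_star_mul_self, one_mul, trace_diagonal]
  rfl

lemma IsHermitian.mul_cfc (hA : A.IsHermitian) (f : ℝ → ℝ) :
    A * cfc f A = cfc (fun x => x * f x) A := by
  nth_rewrite 1 [← cfc_id' ℝ A hA.isSelfAdjoint]
  exact (cfc_mul _ f A (A.finite_real_spectrum.continuousOn _)
    (A.finite_real_spectrum.continuousOn _)).symm

end Matrix

section

variable {ι : Type*} [Fintype ι] [DecidableEq ι] {A : Matrix ι ι ℂ}

lemma psqrt_eq_cfc (hA : A.PosSemidef) : psqrt A = cfc Real.sqrt A := by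
  rw [psqrt, dif_pos hA, hA.1.cfc_eq, IsHermitian.cfc, Unitary.conjStarAlgAut_apply]
  rfl

lemma helstromProj_eq_cfc (hA : A.IsHermitian) :
    helstromProj A = cfc (fun x : ℝ => if 0 ≤ x then (1 : ℝ) else 0) A := by
  rw [helstromProj, dif_pos hA, hA.cfc_eq, IsHermitian.cfc, Unitary.conjStarAlgAut_apply]
  congr 3
  funext i
  split_ifs with h <;> simp [h]

lemma Matrix.IsHermitian.traceNorm_eq_sum_abs_eigenvalues (hA : A.IsHermitian) :
    traceNorm A = ∑ i, |hA.eigenvalues i| := by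
  have hsq : Aᴴ * A = A ^ 2 := by rw [hA.eq, sq]
  rw [traceNorm, psqrt_eq_cfc (posSemidef_conjTranspose_mul_self A), hsq,
    ← cfc_comp_pow Real.sqrt 2 A (ha := hA.isSelfAdjoint), hA.trace_cfc]
  simp [Real.sqrt_sq_eq_abs]

lemma Matrix.IsHermitian.re_trace_mul_helstromProj (hA : A.IsHermitian) :
    (A * helstromProj A).trace.re = ∑ i, max (hA.eigenvalues i) 0 := by
  rw [helstromProj_eq_cfc hA, hA.mul_cfc, hA.trace_cfc]
  simp [max_def']

lemma Matrix.IsHermitian.re_trace_mul_helstromProj_eq_half_traceNorm (hA : A.IsHermitian)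
    (htr : A.trace = 0) : (A * helstromProj A).trace.re = traceNorm A / 2 := by
  have hsum : ∑ i, hA.eigenvalues i = 0 := by
    have h := hA.trace_eq_sum_eigenvalues.symm.trans htr
    rwa [← RCLike.ofReal_sum, RCLike.ofReal_eq_zero] at h
  have hpos : ∀ x : ℝ, max x 0 = (|x| + x) / 2 := fun x => by
    rcases le_total 0 x with h | h <;> simp [h, abs_of_nonneg, abs_of_nonpos]
  rw [hA.re_trace_mul_helstromProj, hA.traceNorm_eq_sum_abs_eigenvalues]
  simp only [hpos, ← Finset.sum_div, Finset.sum_add_distrib, hsum, add_zero]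

lemma re_trace_ite_mul_ite {σ₀ σ₁ : Matrix ι ι ℂ} (E : Matrix ι ι ℂ) (t₀ : σ₀.trace = 1)
    (t₁ : σ₁.trace = 1) (y d : Bool) :
    ((if y then σ₁ else σ₀) * (if d then E else 1 - E)).trace.re =
      ((σ₀ - σ₁) * E).trace.re * (if d ≠ y then 1 else 0) +
        if d then (σ₁ * E).trace.re else (σ₀ * (1 - E)).trace.re := by
  cases y <;> cases d <;> simp [mul_sub, sub_mul, trace_sub, t₀, t₁]

lemma sum_mul_mem_uIcc {α : Type*} [Fintype α] {w : α → ℝ} (hw : ∀ p, 0 ≤ w p)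
    (hw1 : ∑ p, w p = 1) (c : α → Bool) (a b : ℝ) :
    ∑ p, w p * (if c p then b else a) ∈ Set.uIcc a b :=
  convex_uIcc a b |>.sum_mem (fun p _ => hw p) hw1 fun p _ => by
    split_ifs
    exacts [Set.right_mem_uIcc, Set.left_mem_uIcc]

end

theorem stmt17_general {n : ℕ} {X : Type*} [Fintype X]
    (σ₀ σ₁ : Matrix (Fin n) (Fin n) ℂ)
    (h₀ : σ₀.PosSemidef) (h₁ : σ₁.PosSemidef)
    (t₀ : σ₀.trace = 1) (t₁ : σ₁.trace = 1)
    (E₀ E₁ : Matrix (Fin n) (Fin n) ℂ)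
    (hE₀ : E₀ = helstromProj (σ₀ - σ₁)) (hE₁ : E₁ = 1 - E₀)
    (μ : X × Bool → ℝ) (hμ : ∀ p, 0 ≤ μ p) (hμ1 : ∑ p, μ p = 1)
    (g : X → Bool)
    (Rν Rμ : ℝ)
    (hRν : Rν = ∑ p : X × Bool, μ p *
        (((if p.2 then σ₁ else σ₀) * (if g p.1 then E₀ else E₁)).trace).re)
    (hRμ : Rμ = (traceNorm (σ₀ - σ₁) / 2) *
        (∑ p : X × Bool, μ p * (if g p.1 ≠ p.2 then 1 else 0))) :
    Rν - max (((σ₀ * E₁).trace).re) (((σ₁ * E₀).trace).re) ≤ Rμ ∧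
      Rμ ≤ Rν - min (((σ₀ * E₁).trace).re) (((σ₁ * E₀).trace).re) := by
  subst hE₁
  have hT : ((σ₀ - σ₁) * E₀).trace.re = traceNorm (σ₀ - σ₁) / 2 := by
    rw [hE₀]
    exact (h₀.1.sub h₁.1).re_trace_mul_helstromProj_eq_half_traceNorm
      (by rw [trace_sub, t₀, t₁, sub_self])
  have hgap : Rν - Rμ = ∑ p : X × Bool, μ p *
      (if g p.1 then (σ₁ * E₀).trace.re else (σ₀ * (1 - E₀)).trace.re) := by
    rw [hRν, hRμ, ← hT, Finset.mul_sum, ← Finset.sum_sub_distrib]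
    refine Finset.sum_congr rfl fun p _ => ?_
    rw [re_trace_ite_mul_ite E₀ t₀ t₁]
    ring
  have hmem := sum_mul_mem_uIcc hμ hμ1 (g ·.1) (σ₀ * (1 - E₀)).trace.re (σ₁ * E₀).trace.re
  rw [← hgap, Set.uIcc, Set.mem_Icc] at hmem
  constructor <;> linarith [hmem.1, hmem.2]

/-- with the Holevo-Helstrom strategy setup, the true risk
R_μ(h) = (‖σ₀−σ₁‖₁/2)·P_μ[h(x)≠ρ] and the intermediate noisy risk
R̃_ν(g) = P_ν[y ≠ g(x)] satisfy
R̃_ν(g) − max{tr[σ₀E₁], tr[σ₁E₀]} ≤ R_μ(h) ≤ R̃_ν(g) − min{tr[σ₀E₁], tr[σ₁E₀]}. -/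
theorem stmt17 {n : ℕ} {X : Type*} [Fintype X]
    (σ₀ σ₁ : Matrix (Fin n) (Fin n) ℂ)
    (h₀ : σ₀.PosSemidef) (h₁ : σ₁.PosSemidef)
    (t₀ : σ₀.trace = 1) (t₁ : σ₁.trace = 1) (hne : σ₀ ≠ σ₁)
    (E₀ E₁ : Matrix (Fin n) (Fin n) ℂ)
    (hE₀ : E₀ = helstromProj (σ₀ - σ₁)) (hE₁ : E₁ = 1 - E₀)
    (μ : X × Bool → ℝ) (hμ : ∀ p, 0 ≤ μ p) (hμ1 : ∑ p, μ p = 1)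
    (g : X → Bool)
    (Rν Rμ : ℝ)
    (hRν : Rν = ∑ p : X × Bool, μ p *
        (((if p.2 then σ₁ else σ₀) * (if g p.1 then E₀ else E₁)).trace).re)
    (hRμ : Rμ = (traceNorm (σ₀ - σ₁) / 2) *
        (∑ p : X × Bool, μ p * (if g p.1 ≠ p.2 then 1 else 0))) :
    Rν - max (((σ₀ * E₁).trace).re) (((σ₁ * E₀).trace).re) ≤ Rμ ∧
      Rμ ≤ Rν - min (((σ₀ * E₁).trace).re) (((σ₁ * E₀).trace).re) :=
  stmt17_general σ₀ σ₁ h₀ h₁ t₀ t₁ E₀ E₁ hE₀ hE₁ μ hμ hμ1 g Rν Rμ hRν hRμ
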